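/- (Telescoping advantage identity) For any two policies π and π̃ in a finite discounted MDP, E_{τ∼π̃}[∑_{t≥0} γ^t A^π(s_t, a_t)] = V^{π̃}(s_0) − V^π(s_0) for any fixed initial state s_0, where the expectation is over trajectories generated by π̃. -/

import Mathlib

open Finset Filter Topology

variable {S A : Type*}

section Defs
variable [Fintype S] [Fintype A] [DecidableEq S] [DecidableEq A]

/-- Distribution of the state-action pair `(s_k, a_k)` for trajectories started in state `s0`
(with all actions, including the first, sampled from the policy `π`). -/
noncomputable def saDistS (π : S → A → ℝ) (P : S → A → S → ℝ) (s0 : S) : ℕ → S × A → ℝ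
  | 0 => fun sa => (if sa.1 = s0 then 1 else 0) * π sa.1 sa.2
  | k + 1 => fun sa => (∑ p : S × A, saDistS π P s0 k p * P p.1 p.2 sa.1) * π sa.1 sa.2

/-- Distribution of `(s_k, a_k)` for trajectories started with `s_0 = s0`, `a_0 = a0`. -/
noncomputable def saDistSA (π : S → A → ℝ) (P : S → A → S → ℝ) (s0 : S) (a0 : A) :
    ℕ → S × A → ℝ
  | 0 => fun sa => if sa = (s0, a0) then 1 else 0
  | k + 1 => fun sa => (∑ p : S × A, saDistSA π P s0 a0 k p * P p.1 p.2 sa.1) * π sa.1 sa.2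

/-- Distribution of `(s_k, a_k)` for trajectories with initial state distribution `μ0`. -/
noncomputable def saDistI (π : S → A → ℝ) (P : S → A → S → ℝ) (μ0 : S → ℝ) : ℕ → S × A → ℝ
  | 0 => fun sa => μ0 sa.1 * π sa.1 sa.2
  | k + 1 => fun sa => (∑ p : S × A, saDistI π P μ0 k p * P p.1 p.2 sa.1) * π sa.1 sa.2

/-- The value function `V^π(s)`: expected discounted return starting from `s`. -/
noncomputable def Vpi (π : S → A → ℝ) (P : S → A → S → ℝ) (r : S → A → ℝ) (γ : ℝ) (s : S) :
    ℝ :=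
  ∑' k : ℕ, γ ^ k * ∑ sa : S × A, saDistS π P s k sa * r sa.1 sa.2

/-- The action-value function `Q^π(s, a)`: expected discounted return starting from `(s, a)`. -/
noncomputable def Qpi (π : S → A → ℝ) (P : S → A → S → ℝ) (r : S → A → ℝ) (γ : ℝ) (s : S)
    (a : A) : ℝ :=
  ∑' k : ℕ, γ ^ k * ∑ sa : S × A, saDistSA π P s a k sa * r sa.1 sa.2

/-- The advantage function `A^π = Q^π - V^π`. -/
noncomputable def Api (π : S → A → ℝ) (P : S → A → S → ℝ) (r : S → A → ℝ) (γ : ℝ) (s : S)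
    (a : A) : ℝ :=
  Qpi π P r γ s a - Vpi π P r γ s

/-- `π` is a policy: a probability distribution over actions at each state. -/
def IsPolicy (π : S → A → ℝ) : Prop := (∀ s a, 0 ≤ π s a) ∧ ∀ s, ∑ a : A, π s a = 1

/-- `P` is a transition kernel. -/
def IsKernel (P : S → A → S → ℝ) : Prop :=
  (∀ s a s', 0 ≤ P s a s') ∧ ∀ s a, ∑ s' : S, P s a s' = 1

/-- `μ0` is a probability distribution over states. -/
def IsDist (μ0 : S → ℝ) : Prop := (∀ s, 0 ≤ μ0 s) ∧ ∑ s : S, μ0 s = 1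

/-- `f` is `π`-centered: `∑_a π(a|s) f(s,a) = 0` at every state. -/
def IsCentered (π : S → A → ℝ) (f : S → A → ℝ) : Prop := ∀ s, ∑ a : A, π s a * f s a = 0

/-- Probability of the trajectory prefix `(s_0, a_0, …, s_n, a_n)` under policy `π`,
kernel `P` and initial state distribution `μ0`. -/
noncomputable def pathProb (π : S → A → ℝ) (P : S → A → S → ℝ) (μ0 : S → ℝ) (n : ℕ)
    (τ : Fin (n + 1) → S × A) : ℝ :=
  μ0 (τ 0).1 * (∏ k : Fin (n + 1), π (τ k).1 (τ k).2) *
    ∏ k : Fin n, P (τ k.castSucc).1 (τ k.castSucc).2 (τ k.succ).1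

/-- Expectation, over trajectory prefixes of length `n + 1`, of a function `f` of the prefix. -/
noncomputable def pathExp (π : S → A → ℝ) (P : S → A → S → ℝ) (μ0 : S → ℝ) (n : ℕ)
    (f : (Fin (n + 1) → S × A) → ℝ) : ℝ :=
  ∑ τ : Fin (n + 1) → S × A, pathProb π P μ0 n τ * f τ

/-- `n`-step bootstrapped action-value: `E[∑_{k<m} γ^k r_k + γ^m Vtgt(s_m) | s_0 = s, a_0 = a]`. -/
noncomputable def nstepQ (π : S → A → ℝ) (P : S → A → S → ℝ) (r : S → A → ℝ) (γ : ℝ)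
    (Vtgt : S → ℝ) (m : ℕ) (s : S) (a : A) : ℝ :=
  (∑ k ∈ Finset.range m, γ ^ k * ∑ sa : S × A, saDistSA π P s a k sa * r sa.1 sa.2)
    + γ ^ m * ∑ sa : S × A, saDistSA π P s a m sa * Vtgt sa.1

/-- `n`-step bootstrapped value: `E[∑_{k<m} γ^k r_k + γ^m Vtgt(s_m) | s_0 = s]`. -/
noncomputable def nstepV (π : S → A → ℝ) (P : S → A → S → ℝ) (r : S → A → ℝ) (γ : ℝ)
    (Vtgt : S → ℝ) (m : ℕ) (s : S) : ℝ :=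
  ∑ a : A, π s a * nstepQ π P r γ Vtgt m s a

/-- `π`-centering projection. -/
noncomputable def centerProj (π : S → A → ℝ) (f : S → A → ℝ) (s : S) (a : A) : ℝ :=
  f s a - ∑ a' : A, π s a' * f s a'

end Defs

/-!
By the Bellman equation `Q^π(s, a) = r(s, a) + γ 𝔼_{s' ∼ P(s, a)} V^π(s')`, the advantage is
`A^π(s_t, a_t) = r_t + γ V^π(s_{t+1}) - V^π(s_t)` in expectation along any trajectory. Summing
with discount `γ^t` along trajectories of `π̃`, the rewards add up to `V^{π̃}(s_0)` and the
`V^π` terms telescope to `-V^π(s_0)`; all series converge because the state-action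
distributions are probability vectors and `0 ≤ γ < 1`.
-/

theorem Summable.tsum_succ_sub {g : ℕ → ℝ} (hg : Summable g) :
    ∑' t, (g (t + 1) - g t) = -g 0 := by
  rw [((summable_nat_add_iff 1).2 hg).tsum_sub hg, hg.tsum_eq_zero_add]
  ring

theorem summable_discounted_expectation {ι : Type*} [Fintype ι] {d : ℕ → ι → ℝ}
    (hd0 : ∀ k i, 0 ≤ d k i) (hd1 : ∀ k, ∑ i, d k i = 1) (f : ι → ℝ) {γ : ℝ}
    (hγ0 : 0 ≤ γ) (hγ1 : γ < 1) : Summable fun k => γ ^ k * ∑ i, d k i * f i := by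
  have hbound : ∀ k, |∑ i, d k i * f i| ≤ ∑ i, |f i| := fun k =>
    calc |∑ i, d k i * f i| ≤ ∑ i, d k i * ∑ j, |f j| := by
          refine (abs_sum_le_sum_abs _ _).trans (sum_le_sum fun i _ => ?_)
          rw [abs_mul, abs_of_nonneg (hd0 k i)]
          exact mul_le_mul_of_nonneg_left (single_le_sum (fun j _ => abs_nonneg (f j))
            (mem_univ i)) (hd0 k i)
      _ = ∑ i, |f i| := by rw [← sum_mul, hd1, one_mul]
  refine ((summable_geometric_of_lt_one hγ0 hγ1).mul_right (∑ i, |f i|)).of_norm_bounded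
    fun k => ?_
  rw [Real.norm_eq_abs, abs_mul, abs_pow, abs_of_nonneg hγ0]
  exact mul_le_mul_of_nonneg_left (hbound k) (pow_nonneg hγ0 k)

section Distributions
variable [Fintype S] [Fintype A] {π : S → A → ℝ} {P : S → A → S → ℝ}

/-- One step of the state-action chain: `s' ∼ P(s, a)`, then `a' ∼ π(s')`. -/
noncomputable def stepDist (π : S → A → ℝ) (P : S → A → S → ℝ) (d : S × A → ℝ) (sa : S × A) :
    ℝ :=
  (∑ p : S × A, d p * P p.1 p.2 sa.1) * π sa.1 sa.2

theorem stepDist_nonneg (hπ : IsPolicy π) (hP : IsKernel P) {d : S × A → ℝ}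
    (hd : ∀ p, 0 ≤ d p) (sa : S × A) : 0 ≤ stepDist π P d sa :=
  mul_nonneg (sum_nonneg fun p _ => mul_nonneg (hd p) (hP.1 _ _ _)) (hπ.1 _ _)

theorem sum_stepDist_mul_fst (hπ : ∀ s, ∑ a : A, π s a = 1) (d : S × A → ℝ) (f : S → ℝ) :
    ∑ sa, stepDist π P d sa * f sa.1 = ∑ p, d p * ∑ s', P p.1 p.2 s' * f s' := by
  calc ∑ sa, stepDist π P d sa * f sa.1
      = ∑ s', (∑ p : S × A, d p * P p.1 p.2 s') * f s' * ∑ a, π s' a := by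
        simp only [stepDist, Fintype.sum_prod_type, mul_sum]
        exact sum_congr rfl fun _ _ => sum_congr rfl fun _ _ => by ring
    _ = ∑ p, d p * ∑ s', P p.1 p.2 s' * f s' := by
        simp only [hπ, mul_one, sum_mul, mul_sum]
        rw [sum_comm]
        exact sum_congr rfl fun _ _ => sum_congr rfl fun _ _ => by ring

theorem sum_stepDist (hπ : ∀ s, ∑ a : A, π s a = 1) (hP : ∀ s a, ∑ s', P s a s' = 1)
    (d : S × A → ℝ) : ∑ sa, stepDist π P d sa = ∑ p, d p := by
  simpa [hP] using sum_stepDist_mul_fst (P := P) hπ d 1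

variable [DecidableEq S]

theorem saDistS_succ (s0 : S) (k : ℕ) :
    saDistS π P s0 (k + 1) = stepDist π P (saDistS π P s0 k) := rfl

theorem saDistS_nonneg (hπ : IsPolicy π) (hP : IsKernel P) (s0 : S) (k : ℕ) (sa : S × A) :
    0 ≤ saDistS π P s0 k sa := by
  induction k generalizing sa with
  | zero => exact mul_nonneg (by split_ifs <;> norm_num) (hπ.1 _ _)
  | succ k ih => exact stepDist_nonneg hπ hP ih sa

theorem sum_saDistS (hπ : IsPolicy π) (hP : IsKernel P) (s0 : S) (k : ℕ) :
    ∑ sa, saDistS π P s0 k sa = 1 := by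
  induction k with
  | zero => simp [saDistS, Fintype.sum_prod_type, hπ.2]
  | succ k ih => rw [saDistS_succ, sum_stepDist hπ.2 hP.2, ih]

theorem sum_saDistS_zero_mul_fst (hπ : ∀ s, ∑ a : A, π s a = 1) (s0 : S) (f : S → ℝ) :
    ∑ sa, saDistS π P s0 0 sa * f sa.1 = f s0 := by
  simp [saDistS, Fintype.sum_prod_type, ← sum_mul, hπ]

variable [DecidableEq A]

theorem saDistSA_succ (s0 : S) (a0 : A) (k : ℕ) :
    saDistSA π P s0 a0 (k + 1) = stepDist π P (saDistSA π P s0 a0 k) := rfl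

theorem saDistSA_nonneg (hπ : IsPolicy π) (hP : IsKernel P) (s0 : S) (a0 : A) (k : ℕ)
    (sa : S × A) : 0 ≤ saDistSA π P s0 a0 k sa := by
  induction k generalizing sa with
  | zero => simp only [saDistSA]; split_ifs <;> norm_num
  | succ k ih => exact stepDist_nonneg hπ hP ih sa

theorem sum_saDistSA (hπ : IsPolicy π) (hP : IsKernel P) (s0 : S) (a0 : A) (k : ℕ) :
    ∑ sa, saDistSA π P s0 a0 k sa = 1 := by
  induction k with
  | zero => simp [saDistSA]
  | succ k ih => rw [saDistSA_succ, sum_stepDist hπ.2 hP.2, ih]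

/-- Conditioning on the first transition: from `(s, a)` the chain moves to `s' ∼ P(s, a)`
and then runs as if started in `s'`. -/
theorem saDistSA_succ_eq_sum (s : S) (a : A) (k : ℕ) (sa : S × A) :
    saDistSA π P s a (k + 1) sa = ∑ s', P s a s' * saDistS π P s' k sa := by
  induction k generalizing sa with
  | zero => simp [saDistSA, saDistS, ite_mul, mul_ite]
  | succ k ih =>
    simp only [saDistSA_succ _ _ (k + 1), stepDist, ih, saDistS_succ _ k, sum_mul, mul_sum]
    rw [sum_comm]
    exact sum_congr rfl fun _ _ => sum_congr rfl fun _ _ => by ring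

end Distributions

section Values
variable [Fintype S] [Fintype A] [DecidableEq S] [DecidableEq A]
  {π : S → A → ℝ} {P : S → A → S → ℝ} {r : S → A → ℝ} {γ : ℝ}

theorem Qpi_eq_add_discounted_Vpi (hπ : IsPolicy π) (hP : IsKernel P) (hγ0 : 0 ≤ γ)
    (hγ1 : γ < 1) (s : S) (a : A) :
    Qpi π P r γ s a = r s a + γ * ∑ s', P s a s' * Vpi π P r γ s' := by
  have hQ := summable_discounted_expectation (saDistSA_nonneg hπ hP s a) (sum_saDistSA hπ hP s a)
    (fun sa => r sa.1 sa.2) hγ0 hγ1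
  have hV : ∀ s', Summable fun k => γ ^ k * ∑ sa, saDistS π P s' k sa * r sa.1 sa.2 :=
    fun s' => summable_discounted_expectation (saDistS_nonneg hπ hP s') (sum_saDistS hπ hP s')
      (fun sa => r sa.1 sa.2) hγ0 hγ1
  have hsucc : ∀ k, γ ^ (k + 1) * ∑ sa, saDistSA π P s a (k + 1) sa * r sa.1 sa.2
      = ∑ s', P s a s' * γ * (γ ^ k * ∑ sa, saDistS π P s' k sa * r sa.1 sa.2) := fun k => by
    simp only [saDistSA_succ_eq_sum, sum_mul, mul_sum]
    rw [sum_comm]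
    exact sum_congr rfl fun _ _ => sum_congr rfl fun _ _ => by ring
  rw [Qpi, hQ.tsum_eq_zero_add, tsum_congr hsucc,
    Summable.tsum_finsetSum fun s' _ => (hV s').mul_left _]
  simp only [tsum_mul_left, Vpi]
  congr 1
  · simp [saDistSA]
  · rw [mul_sum]
    exact sum_congr rfl fun _ _ => by ring

theorem sum_mul_Api (hπ : IsPolicy π) (hP : IsKernel P) (hγ0 : 0 ≤ γ) (hγ1 : γ < 1)
    {πt : S → A → ℝ} (hπt : ∀ s, ∑ a, πt s a = 1) (d : S × A → ℝ) :
    ∑ sa, d sa * Api π P r γ sa.1 sa.2 = ∑ sa, d sa * r sa.1 sa.2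
      + γ * ∑ sa, stepDist πt P d sa * Vpi π P r γ sa.1 - ∑ sa, d sa * Vpi π P r γ sa.1 := by
  rw [sum_stepDist_mul_fst hπt, mul_sum, ← sum_add_distrib, ← sum_sub_distrib]
  exact sum_congr rfl fun sa _ => by rw [Api, Qpi_eq_add_discounted_Vpi hπ hP hγ0 hγ1]; ring

end Values

/-- Performance difference / telescoping advantage identity: for any two
policies `π` and `π̃`, `E_{τ∼π̃}[∑_t γ^t A^π(s_t,a_t)] = V^{π̃}(s_0) - V^π(s_0)` for any
fixed initial state `s_0`. -/
theorem performance_difference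
    [Fintype S] [Fintype A] [DecidableEq S] [DecidableEq A]
    (π πt : S → A → ℝ) (P : S → A → S → ℝ) (r : S → A → ℝ) (γ : ℝ)
    (hπ : IsPolicy π) (hπt : IsPolicy πt) (hP : IsKernel P) (hγ0 : 0 ≤ γ) (hγ1 : γ < 1)
    (s0 : S) :
    ∑' t : ℕ, γ ^ t * ∑ sa : S × A, saDistS πt P s0 t sa * Api π P r γ sa.1 sa.2
      = Vpi πt P r γ s0 - Vpi π P r γ s0 := by
  set V := Vpi π P r γ
  set D : ℕ → ℝ := fun t => γ ^ t * ∑ sa, saDistS πt P s0 t sa * V sa.1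
  have hd0 := saDistS_nonneg hπt hP s0
  have hd1 := sum_saDistS hπt hP s0
  have hR := summable_discounted_expectation hd0 hd1 (fun sa => r sa.1 sa.2) hγ0 hγ1
  have hD : Summable D := summable_discounted_expectation hd0 hd1 (fun sa => V sa.1) hγ0 hγ1
  have htelescope : ∀ t, γ ^ t * ∑ sa, saDistS πt P s0 t sa * Api π P r γ sa.1 sa.2
      = γ ^ t * ∑ sa, saDistS πt P s0 t sa * r sa.1 sa.2 + (D (t + 1) - D t) := fun t => by
    simp only [D, sum_mul_Api hπ hP hγ0 hγ1 hπt.2, saDistS_succ]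
    ring
  rw [tsum_congr htelescope, hR.tsum_add (((summable_nat_add_iff 1).2 hD).sub hD),
    hD.tsum_succ_sub]
  simp only [D, pow_zero, one_mul]
  rw [sum_saDistS_zero_mul_fst hπt.2, ← sub_eq_add_neg]
  rfl
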